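/- For every t ∈ ℂ with t ≠ 0, the bracket on ℂ⁵ defined by [e₃,e₄] = e₂, [e₄,e₃] = −e₂, [e₃,e₅] = e₁ + t·e₅, [e₅,e₃] = −e₁ − t·e₅, [e₄,e₅] = e₃, [e₅,e₄] = −e₃, [e₂,e₃] = t·e₂, [e₃,e₂] = −t·e₂, [e₂,e₅] = −t·e₃, [e₅,e₂] = t·e₃ (the deformation of the nilpotent Lie algebra W₃ along the 2-cocycle φ₃) is isomorphic to the Lie algebra sl(2,ℂ) ⊕ ℂ² on ℂ⁵ with bracket [e₁,e₂] = e₃, [e₂,e₁] = −e₃, [e₂,e₃] = 2e₂, [e₃,e₂] = −2e₂, [e₁,e₃] = −2e₁, [e₃,e₁] = 2e₁, and all brackets involving e₄ or e₅ equal to zero. -/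
import Mathlib


/-- The deformation of the nilpotent Lie algebra `W₃` on `ℂ⁵` along the
2-cocycle `φ₃`: the brackets `[e₃,e₄] = e₂`, `[e₄,e₃] = -e₂`,
`[e₃,e₅] = e₁ + t·e₅`, `[e₅,e₃] = -e₁ - t·e₅`, `[e₄,e₅] = e₃`,
`[e₅,e₄] = -e₃`, `[e₂,e₃] = t·e₂`, `[e₃,e₂] = -t·e₂`, `[e₂,e₅] = -t·e₃`,
`[e₅,e₂] = t·e₃`, in coordinates. -/
def W3Deformed3 (t : ℂ) (x y : Fin 5 → ℂ) : Fin 5 → ℂ :=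
  ![x 2 * y 4 - x 4 * y 2,
    x 2 * y 3 - x 3 * y 2 + t * (x 1 * y 2 - x 2 * y 1),
    x 3 * y 4 - x 4 * y 3 + t * (x 4 * y 1 - x 1 * y 4),
    0,
    t * (x 2 * y 4 - x 4 * y 2)]

/-- The bracket of the Lie algebra `sl(2,ℂ) ⊕ ℂ²` on `ℂ⁵`: `[e₁,e₂] = e₃`,
`[e₂,e₁] = -e₃`, `[e₂,e₃] = 2e₂`, `[e₃,e₂] = -2e₂`, `[e₁,e₃] = -2e₁`,
`[e₃,e₁] = 2e₁`, all brackets involving `e₄` or `e₅` zero, in coordinates. -/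
def sl2PlusC2Bracket (x y : Fin 5 → ℂ) : Fin 5 → ℂ :=
  ![2 * (x 2 * y 0 - x 0 * y 2),
    2 * (x 1 * y 2 - x 2 * y 1),
    x 0 * y 1 - x 1 * y 0,
    0,
    0]


noncomputable def Tfun (t : ℂ) (x : Fin 5 → ℂ) : Fin 5 → ℂ :=
  ![t^2/2 * x 4, x 1 - x 3 / t, t/2 * x 2, x 0 - x 4 / t, x 3 / t]

noncomputable def Sfun (t : ℂ) (y : Fin 5 → ℂ) : Fin 5 → ℂ :=
  ![y 3 + 2 * y 0 / t^3, y 1 + y 4, 2 * y 2 / t, t * y 4, 2 * y 0 / t^2]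

lemma Tfun_key (t : ℂ) (ht : t ≠ 0) (x y : Fin 5 → ℂ) :
    Tfun t (W3Deformed3 t x y) = sl2PlusC2Bracket (Tfun t x) (Tfun t y) := by
  funext i
  fin_cases i <;>
    simp [Tfun, W3Deformed3, sl2PlusC2Bracket] <;> field_simp <;> ring

/-- For every `t ≠ 0`, the deformation of `W₃` along the 2-cocycle `φ₃` is
isomorphic to `sl(2,ℂ) ⊕ ℂ²`. -/
theorem W3_deformation3_iso_sl2PlusC2 :
    ∀ t : ℂ, t ≠ 0 →
      ∃ T : (Fin 5 → ℂ) ≃ₗ[ℂ] (Fin 5 → ℂ),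
        ∀ x y : Fin 5 → ℂ, T (W3Deformed3 t x y) = sl2PlusC2Bracket (T x) (T y) := by
  intro t ht
  refine ⟨{ toFun := Tfun t, invFun := Sfun t,
            map_add' := ?_, map_smul' := ?_, left_inv := ?_, right_inv := ?_ },
          fun x y => Tfun_key t ht x y⟩
  · intro x y; funext i; fin_cases i <;> simp [Tfun] <;> ring
  · intro c x; funext i; fin_cases i <;> simp [Tfun] <;> ring
  · intro x; funext i; fin_cases i <;> simp [Tfun, Sfun] <;> field_simp <;> ring
  · intro y; funext i; fin_cases i <;> simp [Tfun, Sfun] <;> field_simp <;> ring
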